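/- Let ∞ > q > p > 1, let s > 0 be given by e^{2s} = (q-1)/(p-1), let f be a bounded, compactly supported, nonnegative function on ℝ^d, let u(t,x) = e^{tL}(f^p)(x), and let Q(t) = ∫_{ℝ^d} (e^{sL}(u(t,·)^{1/p}))(x)^q dγ(x) for t > 0. Then lim_{t → ∞} Q(t) = ‖f‖_{L^p(γ)}^q. -/

import Mathlib

open MeasureTheory Real Filter

noncomputable section

/-- The standard Gaussian probability measure on `ℝ^d`. -/
def gaussianMeasure (d : ℕ) : Measure (EuclideanSpace ℝ (Fin d)) :=
  volume.withDensity fun y => ENNReal.ofReal ((2 * π) ^ (-(d : ℝ) / 2) * Real.exp (-‖y‖ ^ 2 / 2))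

/-- The Ornstein–Uhlenbeck semigroup `e^{sL} f (x) = ∫ f(e^{-s}x + (1-e^{-2s})^{1/2} y) dγ(y)`. -/
def OU (d : ℕ) (s : ℝ) (f : EuclideanSpace ℝ (Fin d) → ℝ) (x : EuclideanSpace ℝ (Fin d)) : ℝ :=
  ∫ y, f (Real.exp (-s) • x + Real.sqrt (1 - Real.exp (-2 * s)) • y) ∂(gaussianMeasure d)

/-- The Laplacian `Δf(x) = ∑ ∂²f/∂xᵢ²`. -/
def lap (d : ℕ) (f : EuclideanSpace ℝ (Fin d) → ℝ) (x : EuclideanSpace ℝ (Fin d)) : ℝ :=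
  ∑ i : Fin d,
    fderiv ℝ (fun z => fderiv ℝ f z (EuclideanSpace.single i 1)) x (EuclideanSpace.single i 1)

/-- The Ornstein–Uhlenbeck generator `Lf(x) = Δf(x) - x ⋅ ∇f(x)`. -/
def OUgen (d : ℕ) (f : EuclideanSpace ℝ (Fin d) → ℝ) (x : EuclideanSpace ℝ (Fin d)) : ℝ :=
  lap d f x - fderiv ℝ f x x

/-- A function is of polynomial growth if `|g(x)| ≤ C (1+|x|²)^{N/2}`. -/
def PolyGrowth {d : ℕ} (g : EuclideanSpace ℝ (Fin d) → ℝ) : Prop :=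
  ∃ C > (0 : ℝ), ∃ N : ℕ, ∀ x, |g x| ≤ C * (1 + ‖x‖ ^ 2) ^ ((N : ℝ) / 2)

/-- A time-dependent family is of polynomial growth locally uniformly in `t > 0` if on each
compact interval `[a,b] ⊂ (0,∞)` the constants may be chosen uniformly. -/
def PolyGrowthLocUnif {d : ℕ} (g : ℝ → EuclideanSpace ℝ (Fin d) → ℝ) : Prop :=
  ∀ a b : ℝ, 0 < a → a ≤ b → ∃ C > (0 : ℝ), ∃ N : ℕ,
    ∀ t ∈ Set.Icc a b, ∀ x, |g t x| ≤ C * (1 + ‖x‖ ^ 2) ^ ((N : ℝ) / 2)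

/-!
After the change of variables `z = e^{-t} x + (1 - e^{-2t})^{1/2} y`, `e^{tL} g (x)` is the
Lebesgue integral of `g` against a rescaled Gaussian density; these densities are uniformly
bounded and converge pointwise to that of `γ`, so for `g = f^p ∈ L¹(dz)` dominated convergence
gives `u(t, x) → ∫ f^p dγ` for every `x`. All functions involved are bounded by `sup f`, so
bounded convergence carries this pointwise limit through `(·)^{1/p}`, `e^{sL}`, which fixes
constants, `(·)^q` and the outer integral.
-/

open scoped Topology

lemma HasCompactSupport.integrable_of_abs_le {α : Type*} [TopologicalSpace α] [MeasurableSpace α]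
    [OpensMeasurableSpace α] {μ : Measure α} [IsFiniteMeasureOnCompacts μ] {g : α → ℝ}
    (hgs : HasCompactSupport g) (hg : Measurable g) {C : ℝ} (hC : ∀ z, |g z| ≤ C) :
    Integrable g μ :=
  (Measure.integrableOn_of_bounded hgs.measure_lt_top.ne hg.aestronglyMeasurable
    (M := C) (ae_of_all _ hC)).integrable_of_forall_notMem_eq_zero
    fun _ hz => image_eq_zero_of_notMem_tsupport hz

def gaussianDensity (d : ℕ) (y : EuclideanSpace ℝ (Fin d)) : ℝ :=
  (2 * π) ^ (-(d : ℝ) / 2) * Real.exp (-‖y‖ ^ 2 / 2)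

section

variable {d : ℕ}

lemma gaussianDensity_pos (y : EuclideanSpace ℝ (Fin d)) : 0 < gaussianDensity d y := by
  unfold gaussianDensity
  positivity

lemma gaussianDensity_le (y : EuclideanSpace ℝ (Fin d)) :
    gaussianDensity d y ≤ (2 * π) ^ (-(d : ℝ) / 2) := by
  refine mul_le_of_le_one_right (by positivity) (Real.exp_le_one_iff.2 ?_)
  have := sq_nonneg ‖y‖
  linarith

lemma continuous_gaussianDensity : Continuous (gaussianDensity d) := by
  unfold gaussianDensity
  fun_prop

lemma integral_gaussianDensity : ∫ y, gaussianDensity d y = 1 := by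
  have hexp : ∀ y : EuclideanSpace ℝ (Fin d),
      Real.exp (-‖y‖ ^ 2 / 2) = Real.exp (-(1 / 2) * ‖y‖ ^ 2) := fun y => by ring_nf
  simp_rw [gaussianDensity, integral_const_mul, hexp,
    GaussianFourier.integral_rexp_neg_mul_sq_norm (by norm_num : (0 : ℝ) < 1 / 2),
    finrank_euclideanSpace_fin, show π / (1 / 2 : ℝ) = 2 * π by ring]
  rw [← Real.rpow_add (by positivity)]
  ring_nf
  exact Real.rpow_zero _

lemma integrable_gaussianDensity : Integrable (gaussianDensity d) :=
  .of_integral_ne_zero (by rw [integral_gaussianDensity]; exact one_ne_zero)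

instance : IsProbabilityMeasure (gaussianMeasure d) := by
  constructor
  rw [gaussianMeasure, withDensity_apply _ MeasurableSet.univ, setLIntegral_univ]
  change ∫⁻ y, ENNReal.ofReal (gaussianDensity d y) = 1
  rw [← ofReal_integral_eq_lintegral_ofReal integrable_gaussianDensity
    (ae_of_all _ fun y => (gaussianDensity_pos y).le), integral_gaussianDensity, ENNReal.ofReal_one]

lemma integral_gaussianMeasure (g : EuclideanSpace ℝ (Fin d) → ℝ) :
    ∫ y, g y ∂gaussianMeasure d = ∫ y, gaussianDensity d y * g y := by
  rw [gaussianMeasure, integral_withDensity_eq_integral_toReal_smul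
    (by exact (continuous_gaussianDensity (d := d)).measurable.ennreal_ofReal)
    (ae_of_all _ fun _ => ENNReal.ofReal_lt_top)]
  simp_rw [smul_eq_mul]
  refine integral_congr_ae (ae_of_all _ fun y => ?_)
  exact congrArg (· * g y) (ENNReal.toReal_ofReal (gaussianDensity_pos y).le)

lemma integral_gaussianDensity_mul_comp_affine (g : EuclideanSpace ℝ (Fin d) → ℝ)
    (a : EuclideanSpace ℝ (Fin d)) {c : ℝ} (hc : 0 < c) :
    ∫ y, gaussianDensity d y * g (a + c • y) =
      (c ^ d)⁻¹ * ∫ z, gaussianDensity d (c⁻¹ • (z - a)) * g z := by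
  set F := fun y => gaussianDensity d y * g (a + c • y)
  have hF : ∀ z, F (c⁻¹ • (z - a)) = gaussianDensity d (c⁻¹ • (z - a)) * g z := fun z => by
    simp only [F, smul_inv_smul₀ hc.ne', add_sub_cancel]
  have hscale : ∫ z, F (c⁻¹ • (z - a)) = c ^ d * ∫ y, F y := by
    rw [integral_sub_right_eq_self (fun w => F (c⁻¹ • w)) a,
      Measure.integral_comp_inv_smul_of_nonneg _ _ hc.le, finrank_euclideanSpace_fin, smul_eq_mul]
  simp_rw [hF] at hscale
  rw [hscale, inv_mul_cancel_left₀ (pow_pos hc d).ne']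

lemma tendsto_integral_comp_affine_gaussianMeasure {ι : Type*} {l : Filter ι}
    [l.IsCountablyGenerated] {g : EuclideanSpace ℝ (Fin d) → ℝ} (hg : Integrable g)
    {a : ι → EuclideanSpace ℝ (Fin d)} {c : ι → ℝ} {a₀ : EuclideanSpace ℝ (Fin d)} {c₀ : ℝ}
    (hc₀ : 0 < c₀) (ha : Tendsto a l (𝓝 a₀)) (hc : Tendsto c l (𝓝 c₀)) :
    Tendsto (fun i => ∫ y, g (a i + c i • y) ∂gaussianMeasure d) l
      (𝓝 (∫ y, g (a₀ + c₀ • y) ∂gaussianMeasure d)) := by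
  simp_rw [integral_gaussianMeasure, integral_gaussianDensity_mul_comp_affine g _ hc₀]
  have hrewrite : ∀ᶠ i in l, (c i ^ d)⁻¹ * ∫ z, gaussianDensity d ((c i)⁻¹ • (z - a i)) * g z =
      ∫ y, gaussianDensity d y * g (a i + c i • y) := by
    filter_upwards [hc.eventually (lt_mem_nhds hc₀)] with i hci
    rw [integral_gaussianDensity_mul_comp_affine g _ hci]
  refine Tendsto.congr' hrewrite (((hc.pow d).inv₀ (pow_pos hc₀ d).ne').mul ?_)
  refine tendsto_integral_filter_of_dominated_convergence (fun z => (2 * π) ^ (-(d : ℝ) / 2) * |g z|)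
    (Eventually.of_forall fun i => ?_) (Eventually.of_forall fun i => ae_of_all _ fun z => ?_)
    (hg.abs.const_mul _) (ae_of_all _ fun z => ?_)
  · exact (continuous_gaussianDensity.comp (by fun_prop)).aestronglyMeasurable.mul
      hg.aestronglyMeasurable
  · rw [norm_mul, Real.norm_of_nonneg (gaussianDensity_pos _).le, Real.norm_eq_abs]
    exact mul_le_mul_of_nonneg_right (gaussianDensity_le _) (abs_nonneg _)
  · have harg := ((hc.inv₀ hc₀.ne').smul (tendsto_const_nhds.sub ha) : Tendsto
      (fun i => (c i)⁻¹ • (z - a i)) l (𝓝 (c₀⁻¹ • (z - a₀))))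
    exact ((continuous_gaussianDensity.tendsto _).comp harg).mul_const _

lemma tendsto_OU_atTop {g : EuclideanSpace ℝ (Fin d) → ℝ} (hg : Integrable g)
    (x : EuclideanSpace ℝ (Fin d)) :
    Tendsto (fun t => OU d t g x) atTop (𝓝 (∫ y, g y ∂gaussianMeasure d)) := by
  have ha : Tendsto (fun t : ℝ => Real.exp (-t) • x) atTop (𝓝 0) := by
    simpa using Real.tendsto_exp_neg_atTop_nhds_zero.smul_const x
  have hc : Tendsto (fun t : ℝ => Real.sqrt (1 - Real.exp (-2 * t))) atTop (𝓝 1) := by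
    have hexp : Tendsto (fun t : ℝ => Real.exp (-2 * t)) atTop (𝓝 0) :=
      Real.tendsto_exp_atBot.comp (tendsto_id.const_mul_atTop_of_neg (by norm_num))
    simpa using ((tendsto_const_nhds (x := (1 : ℝ))).sub hexp).sqrt
  simpa [OU] using tendsto_integral_comp_affine_gaussianMeasure hg one_pos ha hc

lemma measurable_OU (s : ℝ) {g : EuclideanSpace ℝ (Fin d) → ℝ} (hg : Measurable g) :
    Measurable (OU d s g) := by
  have hjoint : Measurable fun xy : EuclideanSpace ℝ (Fin d) × EuclideanSpace ℝ (Fin d) =>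
      g (Real.exp (-s) • xy.1 + Real.sqrt (1 - Real.exp (-2 * s)) • xy.2) :=
    hg.comp (by fun_prop)
  exact hjoint.stronglyMeasurable.integral_prod_right'.measurable

lemma abs_OU_le (s : ℝ) {g : EuclideanSpace ℝ (Fin d) → ℝ} {C : ℝ} (hg : ∀ z, |g z| ≤ C)
    (x : EuclideanSpace ℝ (Fin d)) : |OU d s g x| ≤ C := by
  simpa [OU] using norm_integral_le_of_norm_le_const (μ := gaussianMeasure d)
    (f := fun y => g (Real.exp (-s) • x + Real.sqrt (1 - Real.exp (-2 * s)) • y))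
    (ae_of_all _ fun y => hg _)

lemma OU_const (s c : ℝ) (x : EuclideanSpace ℝ (Fin d)) : OU d s (fun _ => c) x = c := by
  simp [OU]

lemma tendsto_OU_of_tendsto {ι : Type*} {l : Filter ι} [l.IsCountablyGenerated] (s : ℝ)
    {h : ι → EuclideanSpace ℝ (Fin d) → ℝ} {H : EuclideanSpace ℝ (Fin d) → ℝ}
    (hmeas : ∀ᶠ i in l, Measurable (h i)) (hbdd : ∃ C, ∀ᶠ i in l, ∀ z, |h i z| ≤ C)
    (hlim : ∀ z, Tendsto (fun i => h i z) l (𝓝 (H z))) (x : EuclideanSpace ℝ (Fin d)) :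
    Tendsto (fun i => OU d s (h i) x) l (𝓝 (OU d s H x)) := by
  obtain ⟨C, hC⟩ := hbdd
  refine tendsto_integral_filter_of_norm_le_const ?_ ⟨C, ?_⟩ (ae_of_all _ fun y => hlim _)
  · filter_upwards [hmeas] with i hi
    exact (hi.comp (by fun_prop)).aestronglyMeasurable
  · filter_upwards [hC] with i hi
    exact ae_of_all _ fun y => hi _

lemma tendsto_integral_OU_rpow {ι : Type*} {l : Filter ι} [l.IsCountablyGenerated] (s : ℝ)
    {q : ℝ} (hq : 0 ≤ q) {h : ι → EuclideanSpace ℝ (Fin d) → ℝ}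
    {H : EuclideanSpace ℝ (Fin d) → ℝ}
    (hmeas : ∀ᶠ i in l, Measurable (h i)) (hbdd : ∃ C, ∀ᶠ i in l, ∀ z, |h i z| ≤ C)
    (hlim : ∀ z, Tendsto (fun i => h i z) l (𝓝 (H z))) :
    Tendsto (fun i => ∫ x, OU d s (h i) x ^ q ∂gaussianMeasure d) l
      (𝓝 (∫ x, OU d s H x ^ q ∂gaussianMeasure d)) := by
  obtain ⟨C, hC⟩ := hbdd
  refine tendsto_integral_filter_of_norm_le_const ?_ ⟨C ^ q, ?_⟩ (ae_of_all _ fun x =>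
    (tendsto_OU_of_tendsto s hmeas ⟨C, hC⟩ hlim x).rpow_const (Or.inr hq))
  · filter_upwards [hmeas] with i hi
    exact ((measurable_OU s hi).pow_const q).aestronglyMeasurable
  · filter_upwards [hC] with i hi
    exact ae_of_all _ fun x => (abs_rpow_le_abs_rpow _ _).trans
      (Real.rpow_le_rpow (abs_nonneg _) (abs_OU_le s hi x) hq)

end

theorem Q_limit_at_infinity_OU_general
    (d : ℕ) (p q s : ℝ) (hp : 1 < p) (hpq : p < q)
    (f : EuclideanSpace ℝ (Fin d) → ℝ) (hmeas : Measurable f)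
    (hbdd : ∃ M : ℝ, ∀ x, f x ≤ M) (hnn : ∀ x, 0 ≤ f x)
    (hsupp : HasCompactSupport f)
    (u : ℝ → EuclideanSpace ℝ (Fin d) → ℝ)
    (hu : ∀ t > (0 : ℝ), ∀ x, u t x = OU d t (fun z => f z ^ p) x)
    (Q : ℝ → ℝ)
    (hQ : ∀ t > (0 : ℝ),
      Q t = ∫ x, (OU d s (fun z => u t z ^ (1 / p)) x) ^ q ∂(gaussianMeasure d)) :
    Filter.Tendsto Q Filter.atTop
      (nhds ((∫ x, |f x| ^ p ∂(gaussianMeasure d)) ^ (q / p))) := by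
  obtain ⟨M, hM⟩ := hbdd
  have hp0 : 0 < p := by linarith
  set g := fun z => f z ^ p
  have hg_meas : Measurable g := hmeas.pow_const p
  have hg_nonneg : ∀ z, 0 ≤ g z := fun z => rpow_nonneg (hnn z) p
  have hg_abs : ∀ z, |g z| ≤ M ^ p := fun z =>
    (abs_of_nonneg (hg_nonneg z)).trans_le (rpow_le_rpow (hnn z) (hM z) hp0.le)
  have hg_int : Integrable g :=
    HasCompactSupport.integrable_of_abs_le (hsupp.comp_left (g := (· ^ p)) (zero_rpow hp0.ne'))
      hg_meas hg_abs
  have hu_eq : ∀ᶠ t in atTop, u t = OU d t g :=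
    (eventually_gt_atTop 0).mono fun t ht => funext (hu t ht)
  set v := fun t z => u t z ^ (1 / p)
  have hv_meas : ∀ᶠ t in atTop, Measurable (v t) := hu_eq.mono fun t ht => by
    simpa only [v, ht] using (measurable_OU t hg_meas).pow_const (1 / p)
  have hv_bdd : ∀ᶠ t in atTop, ∀ z, |v t z| ≤ (M ^ p) ^ (1 / p) := hu_eq.mono fun t ht z =>
    (abs_rpow_le_abs_rpow _ _).trans (rpow_le_rpow (abs_nonneg _)
      (by rw [ht]; exact abs_OU_le t hg_abs z) (by positivity))
  have hv_lim : ∀ z, Tendsto (fun t => v t z) atTop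
      (𝓝 ((∫ y, g y ∂gaussianMeasure d) ^ (1 / p))) := fun z =>
    ((tendsto_OU_atTop hg_int z).congr' (hu_eq.mono fun t ht => by rw [ht])).rpow_const
      (Or.inr (by positivity))
  have hQ_lim := tendsto_integral_OU_rpow s (by linarith : 0 ≤ q) hv_meas ⟨_, hv_bdd⟩ hv_lim
  simp_rw [OU_const, integral_const, probReal_univ, one_smul] at hQ_lim
  rw [← rpow_mul (integral_nonneg hg_nonneg), one_div_mul_eq_div] at hQ_lim
  simp only [abs_of_nonneg, hnn]
  exact hQ_lim.congr' ((eventually_gt_atTop 0).mono fun t ht => (hQ t ht).symm)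

/-- `lim_{t→∞} Q(t) = ‖f‖_{L^p(γ)}^q`. -/
theorem Q_limit_at_infinity_OU
    (d : ℕ) (hd : 1 ≤ d) (p q s : ℝ) (hp : 1 < p) (hpq : p < q) (hs : 0 < s)
    (hseq : Real.exp (2 * s) = (q - 1) / (p - 1))
    (f : EuclideanSpace ℝ (Fin d) → ℝ) (hmeas : Measurable f)
    (hbdd : ∃ M : ℝ, ∀ x, f x ≤ M) (hnn : ∀ x, 0 ≤ f x)
    (hsupp : HasCompactSupport f)
    (u : ℝ → EuclideanSpace ℝ (Fin d) → ℝ)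
    (hu : ∀ t > (0 : ℝ), ∀ x, u t x = OU d t (fun z => f z ^ p) x)
    (Q : ℝ → ℝ)
    (hQ : ∀ t > (0 : ℝ),
      Q t = ∫ x, (OU d s (fun z => u t z ^ (1 / p)) x) ^ q ∂(gaussianMeasure d)) :
    Filter.Tendsto Q Filter.atTop
      (nhds ((∫ x, |f x| ^ p ∂(gaussianMeasure d)) ^ (q / p))) :=
  Q_limit_at_infinity_OU_general d p q s hp hpq f hmeas hbdd hnn hsupp u hu Q hQ
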